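/- arXiv:math/0309307 — 3 statements merged into one kernel-verified Lean document; each statement's English description precedes it below -/
import Mathlib

section
/- Let G be a profinite (compact totally disconnected) group and let γ ∈ G be an element such that the sequence γ^(p^n) converges to the identity (γ is topologically p-unipotent) for a prime p. Then γ is contained in a pro-p subgroup of the closure of the subgroup generated by γ. -/
open Filter Topology

/-- An element of a topological group is *topologically `p`-unipotent* if the
sequence `γ ^ (p ^ n)` converges to the identity. -/
def TopPUnipotent {G : Type*} [Group G] [TopologicalSpace G] (p : ℕ) (γ : G) : Prop :=
  Tendsto (fun n : ℕ => γ ^ (p ^ n)) atTop (𝓝 1)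

/-!
Take `H` to be the closure of `⟨γ⟩`. For an open subgroup `U` this closure lies in `⟨γ⟩ * U`,
so `[H : H ∩ U] = [⟨γ⟩ : ⟨γ⟩ ∩ U]`, the length of the `⟨γ⟩`-orbit of the coset `U` in `G ⧸ U`.
Since `γ ^ p ^ n ∈ U` for large `n`, that length divides `p ^ n`.
-/

open Pointwise Function MulAction

namespace Subgroup

variable {G : Type*} [Group G]

theorem relIndex_eq_of_le_of_subset_mul {H K L : Subgroup G} (hKL : K ≤ L)
    (hL : (L : Set G) ⊆ K * H) : H.relIndex L = H.relIndex K := by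
  refine (Nat.card_congr (Equiv.ofBijective (quotientSubgroupOfEmbeddingOfLE H hKL)
    ⟨(quotientSubgroupOfEmbeddingOfLE H hKL).injective, fun q ↦ ?_⟩)).symm
  induction q using QuotientGroup.induction_on with | H l => ?_
  obtain ⟨k, hk, h, hh, hkh⟩ := hL l.2
  refine ⟨QuotientGroup.mk ⟨k, hk⟩, ?_⟩
  rw [quotientSubgroupOfEmbeddingOfLE_apply_mk, QuotientGroup.eq, mem_subgroupOf]
  simpa [← hkh] using hh

theorem relIndex_zpowers_eq_minimalPeriod (H : Subgroup G) (g : G) :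
    H.relIndex (zpowers g) = minimalPeriod (g • ·) ((1 : G) : G ⧸ H) := by
  have hstab : stabilizer (zpowers g) ((1 : G) : G ⧸ H) = H.subgroupOf (zpowers g) := by
    ext x
    rw [mem_stabilizer_iff, mem_subgroupOf]
    change ((x * 1 : G) : G ⧸ H) = ((1 : G) : G ⧸ H) ↔ _
    rw [QuotientGroup.eq, mul_one, mul_one, inv_mem_iff]
  rw [relIndex, ← hstab, index]
  exact (Nat.card_congr (zpowersQuotientStabilizerEquiv g _).toEquiv).trans
    ((Nat.card_congr Multiplicative.toAdd).trans (Nat.card_zmod _))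

theorem relIndex_zpowers_dvd_of_pow_mem {H : Subgroup G} {g : G} {m : ℕ} (hm : g ^ m ∈ H) :
    H.relIndex (zpowers g) ∣ m := by
  rw [relIndex_zpowers_eq_minimalPeriod]
  refine IsPeriodicPt.minimalPeriod_dvd ?_
  rw [IsPeriodicPt, IsFixedPt, smul_iterate]
  simpa [QuotientGroup.eq] using hm

variable [TopologicalSpace G] [IsTopologicalGroup G]

theorem coe_topologicalClosure_subset_mul_of_isOpen (K : Subgroup G) {U : Subgroup G}
    (hU : IsOpen (U : Set G)) : (K.topologicalClosure : Set G) ⊆ K * U := by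
  rw [topologicalClosure_coe, ← hU.closure_mul]
  exact fun x hx ↦ ⟨x, hx, 1, U.one_mem, mul_one x⟩

theorem relIndex_topologicalClosure_of_isOpen (K : Subgroup G) {U : Subgroup G}
    (hU : IsOpen (U : Set G)) : U.relIndex K.topologicalClosure = U.relIndex K :=
  relIndex_eq_of_le_of_subset_mul K.le_topologicalClosure
    (K.coe_topologicalClosure_subset_mul_of_isOpen hU)

end Subgroup

theorem top_p_unipotent_mem_pro_p_subgroup_general
    {G : Type*} [Group G] [TopologicalSpace G] [IsTopologicalGroup G]
    (p : ℕ) (hp : p.Prime) (γ : G) (hγ : TopPUnipotent p γ) :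
    ∃ H : Subgroup G, γ ∈ H ∧
      (H : Set G) ⊆ closure ((Subgroup.zpowers γ : Subgroup G) : Set G) ∧
      IsClosed (H : Set G) ∧
      ∀ U : Subgroup G, IsOpen (U : Set G) → ∃ m : ℕ, U.relIndex H = p ^ m := by
  refine ⟨(Subgroup.zpowers γ).topologicalClosure,
    (Subgroup.zpowers γ).le_topologicalClosure (Subgroup.mem_zpowers γ),
    (Subgroup.zpowers γ).topologicalClosure_coe.subset,
    (Subgroup.zpowers γ).isClosed_topologicalClosure, fun U hU ↦ ?_⟩
  obtain ⟨n, hn⟩ := (hγ.eventually_mem (hU.mem_nhds U.one_mem)).exists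
  obtain ⟨m, -, hm⟩ := (Nat.dvd_prime_pow hp).1 (Subgroup.relIndex_zpowers_dvd_of_pow_mem hn)
  exact ⟨m, (Subgroup.relIndex_topologicalClosure_of_isOpen _ hU).trans hm⟩

/-- A topologically `p`-unipotent element of a profinite group lies in a pro-`p`
subgroup of the closure of the subgroup it generates (pro-`p`: closed, and every
open subgroup of the ambient group has `p`-power relative index in it). -/
theorem top_p_unipotent_mem_pro_p_subgroup
    {G : Type*} [Group G] [TopologicalSpace G] [IsTopologicalGroup G]
    [CompactSpace G] [TotallyDisconnectedSpace G] [T2Space G]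
    (p : ℕ) (hp : p.Prime) (γ : G) (hγ : TopPUnipotent p γ) :
    ∃ H : Subgroup G, γ ∈ H ∧
      (H : Set G) ⊆ closure ((Subgroup.zpowers γ : Subgroup G) : Set G) ∧
      IsClosed (H : Set G) ∧
      ∀ U : Subgroup G, IsOpen (U : Set G) → ∃ m : ℕ, U.relIndex H = p ^ m :=
  top_p_unipotent_mem_pro_p_subgroup_general p hp γ hγ
end

section
/- Let p be a prime and let A be a square matrix over ℤ/p^kℤ (or more generally over a ring where p is nilpotent) with A nilpotent. Define the truncated logarithm log_{(p)}(1 - A) = -∑_{i=1}^{p-1} A^i / i (assuming the denominators 1,...,p-1 are invertible). If A^p = 0 and p > the nilpotency degree, then exp_{(p)}(log_{(p)}(1-A)) = 1 - A, where exp_{(p)}(X) = ∑_{i=0}^{p-1} X^i / i!. -/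
open Finset

open Polynomial


namespace TruncEL

variable {R : Type*} [CommRing R]

noncomputable def Lp (R : Type*) [CommRing R] (p : ℕ) : R[X] :=
  -∑ j ∈ Finset.Icc 1 (p - 1), C (Ring.inverse ((j : R))) * X ^ j

noncomputable def Ep (R : Type*) [CommRing R] (p : ℕ) : R[X] :=
  ∑ i ∈ Finset.range p, C (Ring.inverse ((Nat.factorial i : R))) * (Lp R p) ^ i

theorem X_dvd_Lp (p : ℕ) : (X : R[X]) ∣ Lp R p := by
  unfold Lp
  rw [dvd_neg]
  refine Finset.dvd_sum fun j hj => ?_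
  have h1 : 1 ≤ j := (Finset.mem_Icc.mp hj).1
  exact Dvd.dvd.mul_left (dvd_pow_self X (by omega)) _

theorem Icc_eq_Ico {p : ℕ} (hp : 2 ≤ p) : Finset.Icc 1 (p - 1) = Finset.Ico 1 p := by
  rw [← Finset.Ico_add_one_right_eq_Icc]
  congr 1
  omega

theorem deriv_Lp {p : ℕ} (hp : 2 ≤ p)
    (hinv : ∀ i : ℕ, 1 ≤ i → i ≤ p - 1 → IsUnit (i : R)) :
    derivative (Lp R p) = -∑ t ∈ Finset.range (p - 1), (X : R[X]) ^ t := by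
  unfold Lp
  rw [map_neg, neg_inj, derivative_sum, Icc_eq_Ico hp, Finset.sum_Ico_eq_sum_range]
  apply Finset.sum_congr rfl
  intro t ht
  have ht' : t < p - 1 := by simpa using ht
  rw [derivative_C_mul_X_pow]
  have hu : IsUnit ((1 + t : ℕ) : R) := hinv (1 + t) (by omega) (by omega)
  rw [show (1 + t) - 1 = t by omega]
  rw [Ring.inverse_mul_cancel _ hu, map_one, one_mul]

theorem one_sub_X_mul_deriv_Lp {p : ℕ} (hp : 2 ≤ p)
    (hinv : ∀ i : ℕ, 1 ≤ i → i ≤ p - 1 → IsUnit (i : R)) :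
    (1 - X) * derivative (Lp R p) = (X : R[X]) ^ (p - 1) - 1 := by
  rw [deriv_Lp hp hinv]
  have h := geom_sum_mul (X : R[X]) (p - 1)
  linear_combination h

theorem fact_unit {p : ℕ} (hinv : ∀ i : ℕ, 1 ≤ i → i ≤ p - 1 → IsUnit (i : R))
    {i : ℕ} (hi : i ≤ p - 1) : IsUnit ((Nat.factorial i : ℕ) : R) := by
  induction i with
  | zero => simpa using isUnit_one
  | succ k ih =>
    rw [Nat.factorial_succ, Nat.cast_mul]
    exact (hinv (k + 1) (by omega) (by omega)).mul (ih (by omega))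

theorem succ_mul_inv_fact {p : ℕ}
    (hinv : ∀ i : ℕ, 1 ≤ i → i ≤ p - 1 → IsUnit (i : R))
    {i : ℕ} (hi : i + 1 ≤ p - 1) :
    (((i + 1 : ℕ)) : R) * Ring.inverse ((Nat.factorial (i + 1) : ℕ) : R)
      = Ring.inverse ((Nat.factorial i : ℕ) : R) := by
  have h1 : ((Nat.factorial (i + 1) : ℕ) : R)
      = ((i + 1 : ℕ) : R) * ((Nat.factorial i : ℕ) : R) := by
    rw [Nat.factorial_succ, Nat.cast_mul]
  rw [h1, Ring.mul_inverse_rev, ← mul_assoc, mul_comm (((i+1:ℕ)):R),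
    mul_assoc, Ring.mul_inverse_cancel _ (hinv (i+1) (by omega) (by omega)), mul_one]

theorem deriv_Ep {p : ℕ} (hp : 2 ≤ p)
    (hinv : ∀ i : ℕ, 1 ≤ i → i ≤ p - 1 → IsUnit (i : R)) :
    derivative (Ep R p) = derivative (Lp R p) *
      (Ep R p - C (Ring.inverse ((Nat.factorial (p - 1) : R))) * (Lp R p) ^ (p - 1)) := by
  unfold Ep
  rw [derivative_sum]
  have step : ∀ i ∈ Finset.range p,
      derivative (C (Ring.inverse ((Nat.factorial i : R))) * (Lp R p) ^ i)
        = derivative (Lp R p) *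
            (C ((i : R) * Ring.inverse ((Nat.factorial i : R))) * (Lp R p) ^ (i - 1)) := by
    intro i _
    rw [derivative_C_mul, derivative_pow, map_mul]
    ring
  rw [Finset.sum_congr rfl step, ← Finset.mul_sum]
  congr 1
  have hsplit : p = (p - 1) + 1 := by omega
  rw [hsplit, Finset.sum_range_succ', Finset.sum_range_succ]
  simp only [Nat.cast_zero, zero_mul, map_zero, zero_mul, add_zero]
  rw [← hsplit]
  have key : ∀ i ∈ Finset.range (p - 1),
      C (((i + 1 : ℕ) : R) * Ring.inverse ((Nat.factorial (i + 1) : R))) *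
          (Lp R p) ^ ((i + 1) - 1)
        = C (Ring.inverse ((Nat.factorial i : R))) * (Lp R p) ^ i := by
    intro i hi
    have hi' : i + 1 ≤ p - 1 := by simpa using Finset.mem_range.mp hi
    rw [succ_mul_inv_fact hinv hi']
    norm_num
  rw [Finset.sum_congr rfl (by exact_mod_cast key)]
  ring

end TruncEL

namespace TruncEL

variable {R : Type*} [CommRing R]

theorem ODE {p : ℕ} (hp : 2 ≤ p)
    (hinv : ∀ i : ℕ, 1 ≤ i → i ≤ p - 1 → IsUnit (i : R)) :
    (1 - X) * derivative (Ep R p) + Ep R p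
      = X ^ (p - 1) * Ep R p - (X ^ (p - 1) - 1) *
          (C (Ring.inverse ((Nat.factorial (p - 1) : R))) * (Lp R p) ^ (p - 1)) := by
  rw [deriv_Ep hp hinv, ← mul_assoc, one_sub_X_mul_deriv_Lp hp hinv]
  ring

theorem Err_coeff {p : ℕ} (hp : 2 ≤ p) {k : ℕ} (hk : k < p - 1) :
    ((X : R[X]) ^ (p - 1) * Ep R p - (X ^ (p - 1) - 1) *
        (C (Ring.inverse ((Nat.factorial (p - 1) : R))) * (Lp R p) ^ (p - 1))).coeff k = 0 := by
  have hd : (X : R[X]) ^ (p - 1) ∣ (Lp R p) ^ (p - 1) :=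
    pow_dvd_pow_of_dvd (X_dvd_Lp p) _
  have hdvd : (X : R[X]) ^ (p - 1) ∣ X ^ (p - 1) * Ep R p - (X ^ (p - 1) - 1) *
      (C (Ring.inverse ((Nat.factorial (p - 1) : R))) * (Lp R p) ^ (p - 1)) :=
    dvd_sub (dvd_mul_right _ _) ((hd.mul_left _).mul_left _)
  exact Polynomial.X_pow_dvd_iff.mp hdvd k hk

theorem Ep_coeff_zero {p : ℕ} (hp : 2 ≤ p) : (Ep R p).coeff 0 = 1 := by
  unfold Ep
  rw [finset_sum_coeff]
  rw [Finset.sum_eq_single_of_mem 0 (Finset.mem_range.mpr (by omega))]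
  · simp [Ring.inverse_one]
  · intro i _ hi
    have hX : (X : R[X]) ∣ (Lp R p) ^ i := (X_dvd_Lp p).trans (dvd_pow_self _ hi)
    have h0 : ((Lp R p) ^ i).coeff 0 = 0 := Polynomial.X_dvd_iff.mp hX
    rw [mul_coeff_zero, h0, mul_zero]

theorem W_coeff {p : ℕ} (hp : 2 ≤ p)
    (hinv : ∀ i : ℕ, 1 ≤ i → i ≤ p - 1 → IsUnit (i : R)) :
    ∀ k < p, (Ep R p - (1 - X)).coeff k = 0 := by
  set W : R[X] := Ep R p - (1 - X) with hWdef
  have hODE : (1 - X) * derivative W + W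
      = X ^ (p - 1) * Ep R p - (X ^ (p - 1) - 1) *
          (C (Ring.inverse ((Nat.factorial (p - 1) : R))) * (Lp R p) ^ (p - 1)) := by
    rw [hWdef]
    rw [map_sub]
    have : derivative (1 - X : R[X]) = -1 := by
      rw [derivative_sub, derivative_one, derivative_X]; ring
    rw [this]
    rw [← ODE hp hinv]
    ring
  have hrec : ∀ k, k < p - 1 →
      W.coeff (k + 1) * ((k : R) + 1) - (X * derivative W).coeff k + W.coeff k = 0 := by
    intro k hk
    have h1 : ((1 - X) * derivative W + W).coeff k = 0 := by
      rw [hODE]; exact Err_coeff hp hk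
    have h2 : ((1 - X) * derivative W + W)
        = derivative W - X * derivative W + W := by ring
    rw [h2] at h1
    simp only [coeff_add, coeff_sub, coeff_derivative] at h1 ⊢
    linear_combination h1
  intro k
  induction k with
  | zero =>
    intro _
    rw [hWdef]
    simp [Ep_coeff_zero hp]
  | succ m ih =>
    intro hm
    have hm' : m < p - 1 := by omega
    have hWm : W.coeff m = 0 := ih (by omega)
    have hXcoeff : (X * derivative W).coeff m = 0 := by
      cases m with
      | zero => exact coeff_X_mul_zero _
      | succ t =>
        rw [coeff_X_mul, coeff_derivative]
        have : W.coeff (t + 1) = 0 := ih (by omega)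
        rw [this, zero_mul]
    have := hrec m hm'
    rw [hXcoeff, hWm] at this
    have h0 : W.coeff (m + 1) * ((m : R) + 1) = 0 := by linear_combination this
    have hu : IsUnit ((m : R) + 1) := by
      have := hinv (m + 1) (by omega) (by omega)
      push_cast at this
      exact this
    exact (IsUnit.mul_left_eq_zero hu).mp h0

theorem Ep_coeff_eq {p : ℕ} (hp : 2 ≤ p)
    (hinv : ∀ i : ℕ, 1 ≤ i → i ≤ p - 1 → IsUnit (i : R)) :
    ∀ k < p, (Ep R p).coeff k = (1 - X : R[X]).coeff k := by
  intro k hk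
  have := W_coeff hp hinv k hk
  rw [coeff_sub, sub_eq_zero] at this
  exact this

theorem aeval_of_pow_eq_zero {S : Type*} [Ring S] [Algebra R S] {x : S} {p : ℕ}
    (hp : 1 ≤ p) (hx : x ^ p = 0) (P : R[X]) :
    Polynomial.aeval x P = ∑ i ∈ Finset.range p, P.coeff i • x ^ i := by
  set N := max p (P.natDegree + 1) with hN
  rw [aeval_eq_sum_range' (n := N) (by omega) x]
  rw [← Finset.sum_range_add_sum_Ico _ (le_max_left p _)]
  have : ∑ i ∈ Finset.Ico p N, P.coeff i • x ^ i = 0 := by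
    apply Finset.sum_eq_zero
    intro i hi
    rw [pow_eq_zero_of_le (Finset.mem_Ico.mp hi).1 hx, smul_zero]
  rw [this, add_zero]

end TruncEL

open TruncEL

/-- Truncated exponential/logarithm identity: if `A` is a square matrix with
`A ^ p = 0` over a ring in which `1, …, p-1` are invertible, and
`L = log_{(p)}(1 - A) = -∑_{i=1}^{p-1} A^i / i`, then
`exp_{(p)}(L) = ∑_{i=0}^{p-1} L^i / i! = 1 - A`. -/
theorem truncated_exp_truncated_log {R : Type*} [CommRing R] {n p : ℕ} (hp : p.Prime)
    (hinv : ∀ i : ℕ, 1 ≤ i → i ≤ p - 1 → IsUnit (i : R))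
    (A : Matrix (Fin n) (Fin n) R) (hA : A ^ p = 0) :
    ∑ i ∈ Finset.range p,
        Ring.inverse ((Nat.factorial i : R)) •
          (-∑ j ∈ Finset.Icc 1 (p - 1), Ring.inverse ((j : R)) • A ^ j) ^ i
      = 1 - A := by
  have hp2 : 2 ≤ p := hp.two_le
  have hL : Polynomial.aeval A (Lp R p)
      = -∑ j ∈ Finset.Icc 1 (p - 1), Ring.inverse ((j : R)) • A ^ j := by
    unfold Lp
    rw [map_neg, map_sum]
    congr 1
    refine Finset.sum_congr rfl fun j _ => ?_
    rw [map_mul, Polynomial.aeval_C, map_pow, Polynomial.aeval_X, ← Algebra.smul_def]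
  have hE : Polynomial.aeval A (Ep R p)
      = ∑ i ∈ Finset.range p,
          Ring.inverse ((Nat.factorial i : R)) •
            (-∑ j ∈ Finset.Icc 1 (p - 1), Ring.inverse ((j : R)) • A ^ j) ^ i := by
    unfold Ep
    rw [map_sum]
    refine Finset.sum_congr rfl fun i _ => ?_
    rw [map_mul, Polynomial.aeval_C, map_pow, hL, ← Algebra.smul_def]
  calc
    ∑ i ∈ Finset.range p,
        Ring.inverse ((Nat.factorial i : R)) •
          (-∑ j ∈ Finset.Icc 1 (p - 1), Ring.inverse ((j : R)) • A ^ j) ^ i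
        = Polynomial.aeval A (Ep R p) := hE.symm
    _ = ∑ i ∈ Finset.range p, (Ep R p).coeff i • A ^ i :=
        aeval_of_pow_eq_zero (by omega) hA _
    _ = ∑ i ∈ Finset.range p, (1 - Polynomial.X : Polynomial R).coeff i • A ^ i := by
        refine Finset.sum_congr rfl fun i hi => ?_
        rw [Ep_coeff_eq hp2 hinv i (Finset.mem_range.mp hi)]
    _ = Polynomial.aeval A (1 - Polynomial.X : Polynomial R) :=
        (aeval_of_pow_eq_zero (by omega) hA _).symm
    _ = 1 - A := by rw [map_sub, map_one, Polynomial.aeval_X]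
end

section
/- Let G be a profinite group, p a prime, and γ ∈ G with topological Jordan decomposition γ = δu (δ of finite order m prime to p, u topologically p-unipotent, δu = uδ). Then δ and u are both limits of powers of γ; in particular δ = lim_{n} γ^(p^(n·φ(m))) where φ is Euler's totient, and hence δ, u lie in the closure of the cyclic group generated by γ. -/
/-!
Since `p ^ φ(m) ≡ 1 mod m`, the power `γ ^ (p ^ (n φ(m))) = δ * u ^ (p ^ (n φ(m)))` fixes `δ`
and its `u`-factor tends to `1`; then `u = δ⁻¹ γ` lies in the closed subgroup generated by `γ`.
-/

open Filter Topology

theorem pow_pow_mul_totient_orderOf {M : Type*} [LeftCancelMonoid M] {g : M} {a : ℕ}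
    (ha : a.Coprime (orderOf g)) (n : ℕ) : g ^ (a ^ (n * (orderOf g).totient)) = g := by
  have hmod : a ^ (n * (orderOf g).totient) ≡ 1 [MOD orderOf g] := by
    simpa only [pow_mul', one_pow] using (Nat.ModEq.pow_totient ha).pow n
  simpa only [pow_one] using pow_eq_pow_iff_modEq.2 hmod

theorem TopPUnipotent.tendsto_pow_pow_mul {G : Type*} [Group G] [TopologicalSpace G]
    {p k : ℕ} {u : G} (hu : TopPUnipotent p u) (hk : 0 < k) :
    Tendsto (fun n : ℕ => u ^ (p ^ (n * k))) atTop (𝓝 1) :=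
  hu.comp (tendsto_id.atTop_mul_const' hk)

theorem Commute.tendsto_mul_pow_pow_mul_totient {G : Type*} [Group G] [TopologicalSpace G]
    [ContinuousMul G] {p : ℕ} {δ u : G} (hcomm : Commute δ u) (hcop : p.Coprime (orderOf δ))
    (hδ : 0 < orderOf δ) (hu : TopPUnipotent p u) :
    Tendsto (fun n : ℕ => (δ * u) ^ (p ^ (n * (orderOf δ).totient))) atTop (𝓝 δ) := by
  simp_rw [hcomm.mul_pow, pow_pow_mul_totient_orderOf hcop]
  simpa only [mul_one] using (hu.tendsto_pow_pow_mul (Nat.totient_pos.2 hδ)).const_mul δ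

theorem jordan_components_are_limits_of_powers_general
    {G : Type*} [Group G] [TopologicalSpace G] [IsTopologicalGroup G]
    (p : ℕ) (hp : p.Prime) (γ δ u : G) (m : ℕ)
    (hdec : γ = δ * u) (hcomm : δ * u = u * δ)
    (hm : orderOf δ = m) (hmpos : 0 < m) (hord : ¬ p ∣ m)
    (hu : TopPUnipotent p u) :
    Tendsto (fun n : ℕ => γ ^ (p ^ (n * Nat.totient m))) atTop (𝓝 δ) ∧
      δ ∈ closure ((Subgroup.zpowers γ : Subgroup G) : Set G) ∧
      u ∈ closure ((Subgroup.zpowers γ : Subgroup G) : Set G) := by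
  subst hdec hm
  have hlim := Commute.tendsto_mul_pow_pow_mul_totient hcomm
    ((Nat.Prime.coprime_iff_not_dvd hp).2 hord) hmpos hu
  have hδ : δ ∈ closure ((Subgroup.zpowers (δ * u) : Subgroup G) : Set G) :=
    mem_closure_of_tendsto hlim (Eventually.of_forall fun n =>
      Subgroup.pow_mem _ (Subgroup.mem_zpowers _) _)
  refine ⟨hlim, hδ, ?_⟩
  have hu_mem := (Subgroup.zpowers (δ * u)).topologicalClosure.mul_mem (inv_mem hδ)
    (subset_closure (Subgroup.mem_zpowers _))
  rwa [inv_mul_cancel_left] at hu_mem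

/-- If `γ = δ * u` is the topological Jordan decomposition of `γ` in a profinite
group, with `δ` of order `m` prime to `p`, then `δ` and `u` are limits of powers
of `γ`: in particular `δ = lim_n γ^(p^(n·φ(m)))`, and `δ, u` lie in the closure of
the cyclic group generated by `γ`. -/
theorem jordan_components_are_limits_of_powers
    {G : Type*} [Group G] [TopologicalSpace G] [IsTopologicalGroup G]
    [CompactSpace G] [TotallyDisconnectedSpace G] [T2Space G]
    (p : ℕ) (hp : p.Prime) (γ δ u : G) (m : ℕ)
    (hdec : γ = δ * u) (hcomm : δ * u = u * δ)
    (hm : orderOf δ = m) (hmpos : 0 < m) (hord : ¬ p ∣ m)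
    (hu : TopPUnipotent p u) :
    Tendsto (fun n : ℕ => γ ^ (p ^ (n * Nat.totient m))) atTop (𝓝 δ) ∧
      δ ∈ closure ((Subgroup.zpowers γ : Subgroup G) : Set G) ∧
      u ∈ closure ((Subgroup.zpowers γ : Subgroup G) : Set G) :=
  jordan_components_are_limits_of_powers_general p hp γ δ u m hdec hcomm hm hmpos hord hu
end
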